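/- For any point q in ℝ² and any two points w_b, w_g in ℝ², there exists a point q* = η w_b + (1-η) w_g with η ∈ [0,1] such that ‖q* - w_g‖ = min(‖q - w_g‖, ‖w_b - w_g‖) and ‖q* - w_b‖ ≤ ‖q - w_b‖. -/

import Mathlib

theorem stmt_4 (q w_b w_g : EuclideanSpace ℝ (Fin 2)) :
    ∃ η : ℝ, η ∈ Set.Icc (0 : ℝ) 1 ∧
      ‖(η • w_b + (1 - η) • w_g) - w_g‖ = min ‖q - w_g‖ ‖w_b - w_g‖ ∧
      ‖(η • w_b + (1 - η) • w_g) - w_b‖ ≤ ‖q - w_b‖ := by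
  set d := ‖q - w_g‖ with hd
  set D := ‖w_b - w_g‖ with hD
  have hd0 : 0 ≤ d := norm_nonneg _
  have hD0 : 0 ≤ D := norm_nonneg _
  by_cases hDz : D = 0
  · refine ⟨0, ⟨le_refl _, zero_le_one⟩, ?_, ?_⟩
    · simp [hDz, hd0]
    · have hbg : w_b = w_g := by
        have := norm_eq_zero.mp hDz
        linear_combination (norm := module) this
      simp [hbg]
  · have hDpos : 0 < D := lt_of_le_of_ne hD0 (Ne.symm hDz)
    refine ⟨min d D / D, ⟨by positivity, ?_⟩, ?_, ?_⟩
    · rw [div_le_one hDpos]; exact min_le_right _ _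
    · have : (min d D / D) • w_b + (1 - min d D / D) • w_g - w_g
          = (min d D / D) • (w_b - w_g) := by module
      rw [this, norm_smul, Real.norm_eq_abs, abs_of_nonneg (by positivity)]
      exact div_mul_cancel₀ _ hDz
    · have heq : (min d D / D) • w_b + (1 - min d D / D) • w_g - w_b
          = (min d D / D - 1) • (w_b - w_g) := by module
      rw [heq, norm_smul, Real.norm_eq_abs]
      have h1 : min d D / D ≤ 1 := by rw [div_le_one hDpos]; exact min_le_right _ _
      rw [abs_of_nonpos (by linarith)]
      have : -(min d D / D - 1) * D = D - min d D := by field_simp; ring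
      rw [this]
      rcases min_cases d D with ⟨h, _⟩ | ⟨h, _⟩
      · rw [h]
        have tri : D ≤ ‖w_b - q‖ + d := by
          have := norm_sub_le_norm_sub_add_norm_sub w_b q w_g
          simpa [hd, hD] using this
        rw [show w_b - q = -(q - w_b) by module, norm_neg] at tri
        linarith
      · rw [h]; simp [norm_nonneg]
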